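/- Let p ≥ 1 be an integer and let R₁,…,R_p be independent integrable real-valued random variables, each with the same mean m and with variance Var(Rᵢ) ≤ v for some v ≥ 0. Then E[max_{1≤i≤p} Rᵢ] ≤ m + √(v·(p − 1)). -/

import Mathlib

/-!
Samuelson's inequality bounds every coordinate of a vector `d ∈ ℝⁿ` by its mean plus
`√((n - 1) / n · ∑ (dⱼ - c)²)`, for any centre `c`: indeed `dᵢ - d̄ = ∑ⱼ wⱼ (dⱼ - c)` with
`wⱼ = δᵢⱼ - 1/n`, and `∑ wⱼ² = (n - 1) / n`, so this is Cauchy–Schwarz. Applying it to the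
values `Rⱼ(ω)` with centre `m` and taking expectations, the mean term contributes `m`, and Jensen's
inequality for the concave square root bounds the expectation of the root by `√((p - 1) / p · p v)`.
-/

open MeasureTheory ProbabilityTheory

open Finset in
theorem sub_mean_le_sqrt_sum_sq {ι : Type*} [Fintype ι] (d : ι → ℝ) (c : ℝ) (i : ι) :
    d i - (∑ j, d j) / Fintype.card ι ≤
      √((Fintype.card ι - 1) / Fintype.card ι * ∑ j, (d j - c) ^ 2) := by
  classical
  have : Nonempty ι := ⟨i⟩
  have hn : (Fintype.card ι : ℝ) ≠ 0 := by positivity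
  set n : ℝ := (Fintype.card ι : ℝ)
  set w : ι → ℝ := fun j => (if j = i then 1 else 0) - 1 / n
  have hw : ∑ j, w j * (d j - c) = d i - (∑ j, d j) / n := by
    simp only [w, sub_mul, ite_mul, one_mul, zero_mul, sum_sub_distrib, sum_ite_eq',
      mem_univ, if_true, ← mul_sum, sum_const, card_univ, nsmul_eq_mul]
    field_simp
    ring
  have hw2 : ∑ j, w j ^ 2 = (n - 1) / n := by
    simp only [w, sub_sq, ite_pow, one_pow, zero_pow two_ne_zero, mul_one, ite_mul,
      zero_mul, mul_ite, mul_zero, sum_add_distrib, sum_sub_distrib, sum_ite_eq', mem_univ,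
      if_true, sum_const, card_univ, nsmul_eq_mul]
    field_simp
    ring
  calc d i - (∑ j, d j) / n = ∑ j, w j * (d j - c) := hw.symm
    _ ≤ √(∑ j, w j ^ 2) * √(∑ j, (d j - c) ^ 2) := Real.sum_mul_le_sqrt_mul_sqrt _ _ _
    _ = √((n - 1) / n * ∑ j, (d j - c) ^ 2) := by
      rw [← Real.sqrt_mul (sum_nonneg fun j _ => sq_nonneg _), hw2]

section Integrals

variable {α : Type*} [MeasurableSpace α] {μ : Measure α}

theorem MeasureTheory.Integrable.sqrt [IsFiniteMeasure μ] {f : α → ℝ} (hf : Integrable f μ) :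
    Integrable (fun x => √(f x)) μ := by
  refine Integrable.mono' (g := fun x => |f x| + 1) (hf.abs.add (integrable_const 1))
    (Real.continuous_sqrt.comp_aestronglyMeasurable hf.1) (ae_of_all _ fun x => ?_)
  rw [Real.norm_of_nonneg (Real.sqrt_nonneg _), Real.sqrt_le_iff]
  exact ⟨by positivity, by nlinarith [abs_nonneg (f x), le_abs_self (f x)]⟩

theorem integral_sqrt_le_sqrt_integral [IsProbabilityMeasure μ] {f : α → ℝ}
    (hf : Integrable f μ) (hf0 : 0 ≤ᵐ[μ] f) :
    ∫ x, √(f x) ∂μ ≤ √(∫ x, f x ∂μ) :=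
  Real.strictConcaveOn_sqrt.concaveOn.le_map_integral Real.continuous_sqrt.continuousOn
    isClosed_Ici hf0 hf hf.sqrt

theorem integrable_iSup {ι : Type*} [Finite ι] [Nonempty ι] {f : ι → α → ℝ}
    (hf : ∀ i, Integrable (f i) μ) : Integrable (fun x => ⨆ i, f i x) μ := by
  have := Fintype.ofFinite ι
  obtain ⟨i₀⟩ := ‹Nonempty ι›
  refine integrable_of_le_of_le
    (AEMeasurable.iSup fun i => (hf i).aemeasurable).aestronglyMeasurable (ae_of_all _ fun x => le_ciSup (Set.finite_range _).bddAbove i₀)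
    (ae_of_all _ fun x => ciSup_le fun i => ?_) (hf i₀)
    (integrable_finsetSum Finset.univ fun i _ => (hf i).abs)
  exact (le_abs_self _).trans
    (Finset.single_le_sum (fun j _ => abs_nonneg (f j x)) (Finset.mem_univ i))

end Integrals

theorem expected_max_order_statistic_bound_general {Ω : Type*} [MeasureSpace Ω]
    [IsProbabilityMeasure (ℙ : Measure Ω)] {p : ℕ} (hp : 1 ≤ p)
    (R : Fin p → Ω → ℝ)
    (hint : ∀ i, Integrable (R i)) {m : ℝ} (hm : ∀ i, ∫ ω, R i ω ∂(ℙ : MeasureTheory.Measure Ω) = m)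
    {v : ℝ} (hint2 : ∀ i, Integrable (fun ω => (R i ω - m) ^ 2))
    (hvar : ∀ i, ∫ ω, (R i ω - m) ^ 2 ∂(ℙ : MeasureTheory.Measure Ω) ≤ v) :
    ∫ ω, (⨆ i, R i ω) ∂(ℙ : MeasureTheory.Measure Ω) ≤ m + Real.sqrt (v * ((p : ℝ) - 1)) := by
  have : NeZero p := ⟨by omega⟩
  have hc : 0 ≤ ((p : ℝ) - 1) / p := div_nonneg (sub_nonneg.2 (by exact_mod_cast hp)) p.cast_nonneg
  set Q : Ω → ℝ := fun ω => ((p : ℝ) - 1) / p * ∑ j, (R j ω - m) ^ 2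
  have hQ : Integrable Q := (integrable_finsetSum _ fun j _ => hint2 j).const_mul _
  have hmean : Integrable fun ω => (∑ j, R j ω) / p :=
    (integrable_finsetSum _ fun j _ => hint j).div_const _
  have hQv : ∫ ω, Q ω ≤ v * (p - 1) := calc
    ∫ ω, Q ω = (p - 1) / p * ∑ j, ∫ ω, (R j ω - m) ^ 2 := by
        rw [integral_const_mul, integral_finsetSum _ fun j _ => hint2 j]
    _ ≤ (p - 1) / p * ∑ _j : Fin p, v := by gcongr with j; exact hvar j
    _ = v * (p - 1) := by
        rw [Finset.sum_const, Finset.card_univ, Fintype.card_fin, nsmul_eq_mul]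
        field_simp
  calc ∫ ω, ⨆ i, R i ω ≤ ∫ ω, (∑ j, R j ω) / p + √(Q ω) :=
        integral_mono (integrable_iSup hint) (hmean.add hQ.sqrt) fun ω => ciSup_le fun i => by
          simpa [Q, add_comm] using sub_mean_le_sqrt_sum_sq (fun j => R j ω) m i
    _ = m + ∫ ω, √(Q ω) := by
        rw [integral_add hmean hQ.sqrt, integral_div, integral_finsetSum _ fun j _ => hint j]
        simp only [hm, Finset.sum_const, Finset.card_univ, Fintype.card_fin, nsmul_eq_mul]
        field_simp
    _ ≤ m + √(v * (p - 1)) := by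
        gcongr
        have hQ0 : 0 ≤ᵐ[ℙ] Q := ae_of_all _ fun ω => mul_nonneg hc (by positivity)
        exact (integral_sqrt_le_sqrt_integral hQ hQ0).trans (Real.sqrt_le_sqrt hQv)

/-- Eqn. (23) of the paper (Arnold–Groeneveld): bound on the expectation of the
highest order statistic of `p` independent real random variables with common mean `m`
and variance bound `v`. -/
theorem expected_max_order_statistic_bound {Ω : Type*} [MeasureSpace Ω]
    [IsProbabilityMeasure (ℙ : Measure Ω)] {p : ℕ} (hp : 1 ≤ p)
    (R : Fin p → Ω → ℝ) (hmeas : ∀ i, Measurable (R i))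
    (hindep : iIndepFun R ℙ)
    (hint : ∀ i, Integrable (R i)) {m : ℝ} (hm : ∀ i, ∫ ω, R i ω ∂(ℙ : MeasureTheory.Measure Ω) = m)
    {v : ℝ} (hv : 0 ≤ v) (hint2 : ∀ i, Integrable (fun ω => (R i ω - m) ^ 2))
    (hvar : ∀ i, ∫ ω, (R i ω - m) ^ 2 ∂(ℙ : MeasureTheory.Measure Ω) ≤ v) :
    ∫ ω, (⨆ i, R i ω) ∂(ℙ : MeasureTheory.Measure Ω) ≤ m + Real.sqrt (v * ((p : ℝ) - 1)) :=
  expected_max_order_statistic_bound_general hp R hint hm hint2 hvar
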